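/- Componentwise error decomposition for API: if π_{k+1} is greedy w.r.t. v_k = v_{π_{k,m}} + ε_k, then v_* − v_{π_{k+1,m}} ≤ γ P_{π_*}(v_* − v_{π_{k,m}}) + γ(P_{π_{k+1}} − P_{π_*}) ε_k + Γ_{k+1,m}(v_{π'_{k,m}} − v_{π_{k+1,m}}) componentwise, where π'_{k,m} is the 1-step right rotation of π_{k,m} (i.e., v_{π'_{k,m}} = T_{π_{k−m+1}} v_{π_{k,m}}). -/

import Mathlib

open Finset Filter

variable {S A : Type*} [Fintype S] [Nonempty S] [DecidableEq S] [Fintype A] [Nonempty A]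

/-- `P s a s'` is the probability of moving to `s'` when taking action `a` in state `s`. -/
def IsStochastic (P : S → A → S → ℝ) : Prop :=
  (∀ s a s', 0 ≤ P s a s') ∧ ∀ s a, ∑ s', P s a s' = 1

/-- Bellman operator `T_π` of a stationary deterministic policy `π`. -/
noncomputable def Tpol (P : S → A → S → ℝ) (r : S → A → ℝ) (γ : ℝ)
    (π : S → A) (v : S → ℝ) : S → ℝ :=
  fun s => r s (π s) + γ * ∑ s', P s (π s) s' * v s'

/-- Bellman optimality operator `T`. -/
noncomputable def Topt (P : S → A → S → ℝ) (r : S → A → ℝ) (γ : ℝ) (v : S → ℝ) : S → ℝ :=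
  fun s => univ.sup' univ_nonempty (fun a => r s a + γ * ∑ s', P s a s' * v s')

/-- Application of the transition matrix `P_π` to a value function. -/
noncomputable def Pap (P : S → A → S → ℝ) (π : S → A) (v : S → ℝ) : S → ℝ :=
  fun s => ∑ s', P s (π s) s' * v s'

/-- `Tcomp P r γ πs k m = T_{π_k} T_{π_{k-1}} ⋯ T_{π_{k-m+1}}`. -/
noncomputable def Tcomp (P : S → A → S → ℝ) (r : S → A → ℝ) (γ : ℝ)
    (πs : ℕ → S → A) : ℕ → ℕ → (S → ℝ) → (S → ℝ)
  | _, 0, v => v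
  | k, m+1, v => Tpol P r γ (πs k) (Tcomp P r γ πs (k-1) m v)

/-- `Gap P γ πs k m = (γP_{π_k})(γP_{π_{k-1}})⋯(γP_{π_{k-m+1}})` applied to a value function. -/
noncomputable def Gap (P : S → A → S → ℝ) (γ : ℝ)
    (πs : ℕ → S → A) : ℕ → ℕ → (S → ℝ) → (S → ℝ)
  | _, 0, v => v
  | k, m+1, v => γ • Pap P (πs k) (Gap P γ πs (k-1) m v)

/-! Each `T_π` is affine with linear part `γ P_π`. Writing
`v_* − v_{π_{k+1,m}} = (T_{π_*} v_* − T_{π_*} v_{π_{k,m}}) + (T_{π_*} v_{π_{k,m}} − T_{π_{k+1}} v_{π_{k,m}})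
  + (T_{π_{k+1}} v_{π_{k,m}} − v_{π_{k+1,m}})`,
the first term is `γ P_{π_*}(v_* − v_{π_{k,m}})`, greediness w.r.t. `v_{π_{k,m}} + ε_k` bounds the
second by `γ (P_{π_{k+1}} − P_{π_*}) ε_k`, and the third is `Γ_{k+1,m}(v_{π'_{k,m}} − v_{π_{k+1,m}})`
because `T_{π_{k+1}} v_{π_{k,m}} = T_{k+1,m} T_{π_{k−m+1}} v_{π_{k,m}}` while `v_{π_{k+1,m}}` is the
fixed point of `T_{k+1,m}`. -/

section

omit [Nonempty S] [DecidableEq S]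

variable (P : S → A → S → ℝ) (r : S → A → ℝ) (γ : ℝ)

omit [Fintype A] [Nonempty A] in
theorem Tpol_sub_Tpol (π : S → A) (u v : S → ℝ) :
    Tpol P r γ π u - Tpol P r γ π v = γ • Pap P π (u - v) := by
  funext s
  simp only [Pi.sub_apply, Pi.smul_apply, Tpol, Pap, smul_eq_mul, mul_sub, sum_sub_distrib]
  ring

theorem Tpol_apply_le_Topt (π : S → A) (v : S → ℝ) (s : S) :
    Tpol P r γ π v s ≤ Topt P r γ v s :=
  le_sup' (fun a => r s a + γ * ∑ s', P s a s' * v s') (mem_univ (π s))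

theorem Tpol_apply_sub_Tpol_le_of_greedy {π π' : S → A} {v ε : S → ℝ}
    (hgreedy : Tpol P r γ π' (v + ε) = Topt P r γ (v + ε)) (s : S) :
    Tpol P r γ π v s - Tpol P r γ π' v s ≤ γ * (Pap P π' ε s - Pap P π ε s) := by
  have hshift : ∀ σ : S → A, Tpol P r γ σ (v + ε) s - Tpol P r γ σ v s = γ * Pap P σ ε s := by
    intro σ
    simpa only [Pi.sub_apply, Pi.smul_apply, smul_eq_mul, add_sub_cancel_left]
      using congrFun (Tpol_sub_Tpol P r γ σ (v + ε) v) s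
  have hle := Tpol_apply_le_Topt P r γ π (v + ε) s
  rw [← hgreedy] at hle
  linarith [hshift π, hshift π']

omit [Fintype A] [Nonempty A] in
theorem Tcomp_sub_Tcomp (πs : ℕ → S → A) (u v : S → ℝ) (k m : ℕ) :
    Tcomp P r γ πs k m u - Tcomp P r γ πs k m v = Gap P γ πs k m (u - v) := by
  induction m generalizing k with
  | zero => rfl
  | succ m ih => exact (Tpol_sub_Tpol P r γ (πs k) _ _).trans (by rw [ih]; rfl)

omit [Fintype A] [Nonempty A] in
theorem Tcomp_succ' (πs : ℕ → S → A) (v : S → ℝ) (k m : ℕ) :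
    Tcomp P r γ πs k (m + 1) v = Tcomp P r γ πs k m (Tpol P r γ (πs (k - m)) v) := by
  induction m generalizing k with
  | zero => rfl
  | succ m ih =>
    change Tpol P r γ (πs k) (Tcomp P r γ πs (k - 1) (m + 1) v) = _
    rw [ih (k - 1), Nat.sub_sub, Nat.add_comm 1 m]
    rfl

omit [Fintype A] [Nonempty A] in
theorem Tpol_eq_Tcomp_rotate_of_fixed {πs : ℕ → S → A} {k m : ℕ} {v : S → ℝ}
    (hfix : Tcomp P r γ πs k m v = v) :
    Tpol P r γ (πs (k + 1)) v = Tcomp P r γ πs (k + 1) m (Tpol P r γ (πs (k + 1 - m)) v) := by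
  rw [← Tcomp_succ']
  change _ = Tpol P r γ (πs (k + 1)) (Tcomp P r γ πs k m v)
  rw [hfix]

end

theorem api_componentwise_decomposition_general (P : S → A → S → ℝ) (r : S → A → ℝ) (γ : ℝ)
    (πs : ℕ → S → A) (k m : ℕ) (hk : m ≤ k)
    (pistar : S → A) (vstar : S → ℝ)
    (hstar : Tpol P r γ pistar vstar = vstar)
    (vkm vk1m εk : S → ℝ)
    (hfix : Tcomp P r γ πs k m vkm = vkm)
    (hfix' : Tcomp P r γ πs (k+1) m vk1m = vk1m)
    (hgreedy : Tpol P r γ (πs (k+1)) (vkm + εk) = Topt P r γ (vkm + εk)) :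
    ∀ s, vstar s - vk1m s ≤
      γ * Pap P pistar (vstar - vkm) s
      + γ * (Pap P (πs (k+1)) εk s - Pap P pistar εk s)
      + Gap P γ πs (k+1) m (Tpol P r γ (πs (k - m + 1)) vkm - vk1m) s := by
  intro s
  have hgreedy_gap := Tpol_apply_sub_Tpol_le_of_greedy P r γ (π := pistar) hgreedy s
  have hrotate : Tpol P r γ (πs (k + 1)) vkm - vk1m
      = Gap P γ πs (k + 1) m (Tpol P r γ (πs (k - m + 1)) vkm - vk1m) := by
    rw [Tpol_eq_Tcomp_rotate_of_fixed P r γ hfix, Nat.sub_add_comm hk, ← Tcomp_sub_Tcomp, hfix']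
  have hstar_s := congrFun hstar s
  have hopt_s := congrFun (Tpol_sub_Tpol P r γ pistar vstar vkm) s
  have hrotate_s := congrFun hrotate s
  simp only [Pi.sub_apply, Pi.smul_apply, smul_eq_mul] at hopt_s hrotate_s
  linarith

/-- Componentwise error decomposition for API:
`v_* − v_{π_{k+1,m}} ≤ γP_{π_*}(v_* − v_{π_{k,m}}) + γ(P_{π_{k+1}} − P_{π_*})ε_k
  + Γ_{k+1,m}(v_{π'_{k,m}} − v_{π_{k+1,m}})` with `v_{π'_{k,m}} = T_{π_{k−m+1}} v_{π_{k,m}}`. -/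
theorem api_componentwise_decomposition (P : S → A → S → ℝ) (r : S → A → ℝ) (γ : ℝ)
    (hP : IsStochastic P) (hγ0 : 0 < γ) (hγ1 : γ < 1)
    (πs : ℕ → S → A) (k m : ℕ) (hm : 1 ≤ m) (hk : m ≤ k)
    (pistar : S → A) (vstar : S → ℝ)
    (hstar : Tpol P r γ pistar vstar = vstar) (hstaropt : Topt P r γ vstar = vstar)
    (vkm vk1m εk : S → ℝ)
    (hfix : Tcomp P r γ πs k m vkm = vkm)
    (hfix' : Tcomp P r γ πs (k+1) m vk1m = vk1m)
    (hgreedy : Tpol P r γ (πs (k+1)) (vkm + εk) = Topt P r γ (vkm + εk)) :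
    ∀ s, vstar s - vk1m s ≤
      γ * Pap P pistar (vstar - vkm) s
      + γ * (Pap P (πs (k+1)) εk s - Pap P pistar εk s)
      + Gap P γ πs (k+1) m (Tpol P r γ (πs (k - m + 1)) vkm - vk1m) s :=
  api_componentwise_decomposition_general P r γ πs k m hk pistar vstar hstar vkm vk1m εk hfix hfix'
    hgreedy
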